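/- arXiv:2605.03458 — 5 statements merged into one kernel-verified Lean document; each statement's English description precedes it below -/
import Mathlib

section
/- Let A be a ring, let m, n, k, l be natural numbers, and let a : A^m → A^n, b : A^m → A^k, c : A^n → A^l, d : A^k → A^l be A-linear maps between free right A-modules. Let X and Y be right A-modules with surjective A-linear maps p : A^n → X and q : A^l → Y such that the range of a equals the kernel of p and the range of d equals the kernel of q, and let f : X → Y be an A-linear map satisfying f ∘ p = q ∘ c and c ∘ a = d ∘ b. Then for every right A-module M the following are equivalent: (1) M is injective with respect to f; (2) for every A-linear map α : A^n ⊕ A^k → M satisfying α ∘ w = 0, where w : A^m ⊕ A^k → A^n ⊕ A^k is the map (x, y) ↦ (a x, b x − y), there exists an A-linear map β : A^l → M with β ∘ w' = α, where w' : A^n ⊕ A^k → A^l is the map (x, y) ↦ c x − d y. -/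
/-!
Since `p` and `q` present `X` and `Y` as cokernels of `a` and `d`, maps `X → M` are the maps
`φ : A^n → M` with `φ ∘ a = 0`, and maps `Y → M` are the maps `β : A^l → M` with `β ∘ d = 0`;
under `f ∘ p = q ∘ c`, extending along `f` becomes `β ∘ c = φ`. Condition (2) is the same
statement in disguise: `α ∘ w = 0` says exactly that `α = φ ∘ fst` with `φ ∘ a = 0`, and then
`β ∘ w' = α` says `β ∘ c = φ` and `β ∘ d = 0`.
-/

universe u v w

namespace LinearMap

variable {R : Type*} [Ring R] {P N K L X Y M : Type*}
  [AddCommGroup P] [Module R P] [AddCommGroup N] [Module R N] [AddCommGroup K] [Module R K]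
  [AddCommGroup L] [Module R L] [AddCommGroup X] [Module R X] [AddCommGroup Y] [Module R Y]
  [AddCommGroup M] [Module R M]

theorem exists_comp_eq_iff_comp_eq_zero {a : P →ₗ[R] N} {p : N →ₗ[R] X}
    (hp : Function.Surjective p) (hap : range a = ker p) (φ : N →ₗ[R] M) :
    (∃ g : X →ₗ[R] M, g ∘ₗ p = φ) ↔ φ ∘ₗ a = 0 := by
  constructor
  · rintro ⟨g, rfl⟩
    rw [comp_assoc, range_le_ker_iff.mp hap.le, comp_zero]
  · intro hφ
    have hker : ker p ≤ ker φ := hap ▸ range_le_ker_iff.mpr hφ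
    refine ⟨(ker p).liftQ φ hker ∘ₗ (p.quotKerEquivOfSurjective hp).symm.toLinearMap, ?_⟩
    ext x
    simp [quotKerEquivOfSurjective_symm_apply]

theorem comp_prod_fst_sub_snd_eq_zero_iff (a : P →ₗ[R] N) (b : P →ₗ[R] K)
    (α : N × K →ₗ[R] M) :
    α ∘ₗ (a ∘ₗ fst R P K).prod (b ∘ₗ fst R P K - snd R P K) = 0 ↔
      α ∘ₗ inr R N K = 0 ∧ (α ∘ₗ inl R N K) ∘ₗ a = 0 := by
  constructor
  · intro h
    have hinr : α ∘ₗ inr R N K = 0 := by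
      ext y
      simpa using congr($h (0, -y))
    refine ⟨hinr, ?_⟩
    ext x
    simpa using congr($h (x, b x))
  · rintro ⟨hinr, hinla⟩
    refine LinearMap.ext fun ⟨x, y⟩ => ?_
    have hsplit : α (a x, b x - y) = α (a x, 0) + α (0, b x - y) := by
      rw [← map_add, Prod.mk_add_mk, add_zero, zero_add]
    simpa [hsplit] using congr($hinla x + $hinr (b x - y))

theorem comp_fst_sub_snd_eq_iff (c : N →ₗ[R] L) (d : K →ₗ[R] L) (β : L →ₗ[R] M)
    (α : N × K →ₗ[R] M) :
    β ∘ₗ (c ∘ₗ fst R N K - d ∘ₗ snd R N K) = α ↔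
      β ∘ₗ c = α ∘ₗ inl R N K ∧ -(β ∘ₗ d) = α ∘ₗ inr R N K := by
  rw [prod_ext_iff]
  simp [comp_sub, sub_comp, comp_assoc]

theorem forall_exists_comp_eq_iff_of_presentation {a : P →ₗ[R] N} {c : N →ₗ[R] L}
    {d : K →ₗ[R] L} {p : N →ₗ[R] X} {q : L →ₗ[R] Y}
    (hp : Function.Surjective p) (hq : Function.Surjective q)
    (hap : range a = ker p) (hdq : range d = ker q)
    {f : X →ₗ[R] Y} (hfp : f ∘ₗ p = q ∘ₗ c) :
    (∀ g : X →ₗ[R] M, ∃ g' : Y →ₗ[R] M, g' ∘ₗ f = g) ↔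
      ∀ φ : N →ₗ[R] M, φ ∘ₗ a = 0 → ∃ β : L →ₗ[R] M, β ∘ₗ d = 0 ∧ β ∘ₗ c = φ := by
  constructor
  · intro hf φ hφ
    obtain ⟨g, rfl⟩ := (exists_comp_eq_iff_comp_eq_zero hp hap φ).mpr hφ
    obtain ⟨g', rfl⟩ := hf g
    refine ⟨g' ∘ₗ q, ?_, ?_⟩
    · rw [comp_assoc, range_le_ker_iff.mp hdq.le, comp_zero]
    · rw [comp_assoc, comp_assoc, hfp]
  · intro h g
    obtain ⟨β, hβd, hβc⟩ := h (g ∘ₗ p) ((exists_comp_eq_iff_comp_eq_zero hp hap _).mp ⟨g, rfl⟩)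
    obtain ⟨g', rfl⟩ := (exists_comp_eq_iff_comp_eq_zero hq hdq β).mpr hβd
    refine ⟨g', (cancel_right hp).mp ?_⟩
    rw [comp_assoc, hfp, ← comp_assoc, hβc]

end LinearMap

open LinearMap in
theorem stmt0_general {A : Type u} [Ring A] {m n k l : ℕ}
    (a : (Fin m → Aᵐᵒᵖ) →ₗ[Aᵐᵒᵖ] (Fin n → Aᵐᵒᵖ))
    (b : (Fin m → Aᵐᵒᵖ) →ₗ[Aᵐᵒᵖ] (Fin k → Aᵐᵒᵖ))
    (c : (Fin n → Aᵐᵒᵖ) →ₗ[Aᵐᵒᵖ] (Fin l → Aᵐᵒᵖ))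
    (d : (Fin k → Aᵐᵒᵖ) →ₗ[Aᵐᵒᵖ] (Fin l → Aᵐᵒᵖ))
    {X : Type v} [AddCommGroup X] [Module Aᵐᵒᵖ X]
    {Y : Type v} [AddCommGroup Y] [Module Aᵐᵒᵖ Y]
    (p : (Fin n → Aᵐᵒᵖ) →ₗ[Aᵐᵒᵖ] X) (q : (Fin l → Aᵐᵒᵖ) →ₗ[Aᵐᵒᵖ] Y)
    (hp : Function.Surjective p) (hq : Function.Surjective q)
    (hap : LinearMap.range a = LinearMap.ker p)
    (hdq : LinearMap.range d = LinearMap.ker q)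
    (f : X →ₗ[Aᵐᵒᵖ] Y)
    (hfp : f ∘ₗ p = q ∘ₗ c)
    (M : Type w) [AddCommGroup M] [Module Aᵐᵒᵖ M] :
    -- (1) `M` is injective with respect to `f`
    (∀ g : X →ₗ[Aᵐᵒᵖ] M, ∃ g' : Y →ₗ[Aᵐᵒᵖ] M, g' ∘ₗ f = g) ↔
    -- (2) every `α` vanishing on `w` factors through `w'`
    (∀ α : ((Fin n → Aᵐᵒᵖ) × (Fin k → Aᵐᵒᵖ)) →ₗ[Aᵐᵒᵖ] M,
        α ∘ₗ (LinearMap.prod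
              (a ∘ₗ LinearMap.fst Aᵐᵒᵖ (Fin m → Aᵐᵒᵖ) (Fin k → Aᵐᵒᵖ))
              ((b ∘ₗ LinearMap.fst Aᵐᵒᵖ (Fin m → Aᵐᵒᵖ) (Fin k → Aᵐᵒᵖ)) -
                LinearMap.snd Aᵐᵒᵖ (Fin m → Aᵐᵒᵖ) (Fin k → Aᵐᵒᵖ))) = 0 →
        ∃ β : (Fin l → Aᵐᵒᵖ) →ₗ[Aᵐᵒᵖ] M,
          β ∘ₗ ((c ∘ₗ LinearMap.fst Aᵐᵒᵖ (Fin n → Aᵐᵒᵖ) (Fin k → Aᵐᵒᵖ)) -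
                (d ∘ₗ LinearMap.snd Aᵐᵒᵖ (Fin n → Aᵐᵒᵖ) (Fin k → Aᵐᵒᵖ))) = α) := by
  rw [forall_exists_comp_eq_iff_of_presentation hp hq hap hdq hfp]
  constructor
  · intro h α hα
    obtain ⟨hαr, hαla⟩ := (comp_prod_fst_sub_snd_eq_zero_iff a b α).mp hα
    obtain ⟨β, hβd, hβc⟩ := h _ hαla
    exact ⟨β, (comp_fst_sub_snd_eq_iff c d β α).mpr ⟨hβc, by rw [hβd, hαr, neg_zero]⟩⟩
  · intro h φ hφ
    set α := φ ∘ₗ fst Aᵐᵒᵖ (Fin n → Aᵐᵒᵖ) (Fin k → Aᵐᵒᵖ)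
    have hinl : α ∘ₗ inl _ _ _ = φ := rfl
    have hinr : α ∘ₗ inr _ _ _ = 0 := by ext; simp [α]
    obtain ⟨β, hβ⟩ := h α <| (comp_prod_fst_sub_snd_eq_zero_iff a b α).mpr ⟨hinr, hinl ▸ hφ⟩
    obtain ⟨hβc, hβd⟩ := (comp_fst_sub_snd_eq_iff c d β α).mp hβ
    exact ⟨β, neg_eq_zero.mp (hβd.trans hinr), hβc.trans hinl⟩

theorem stmt0 {A : Type u} [Ring A] {m n k l : ℕ}
    (a : (Fin m → Aᵐᵒᵖ) →ₗ[Aᵐᵒᵖ] (Fin n → Aᵐᵒᵖ))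
    (b : (Fin m → Aᵐᵒᵖ) →ₗ[Aᵐᵒᵖ] (Fin k → Aᵐᵒᵖ))
    (c : (Fin n → Aᵐᵒᵖ) →ₗ[Aᵐᵒᵖ] (Fin l → Aᵐᵒᵖ))
    (d : (Fin k → Aᵐᵒᵖ) →ₗ[Aᵐᵒᵖ] (Fin l → Aᵐᵒᵖ))
    {X : Type v} [AddCommGroup X] [Module Aᵐᵒᵖ X]
    {Y : Type v} [AddCommGroup Y] [Module Aᵐᵒᵖ Y]
    (p : (Fin n → Aᵐᵒᵖ) →ₗ[Aᵐᵒᵖ] X) (q : (Fin l → Aᵐᵒᵖ) →ₗ[Aᵐᵒᵖ] Y)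
    (hp : Function.Surjective p) (hq : Function.Surjective q)
    (hap : LinearMap.range a = LinearMap.ker p)
    (hdq : LinearMap.range d = LinearMap.ker q)
    (f : X →ₗ[Aᵐᵒᵖ] Y)
    (hfp : f ∘ₗ p = q ∘ₗ c) (hca : c ∘ₗ a = d ∘ₗ b)
    (M : Type w) [AddCommGroup M] [Module Aᵐᵒᵖ M] :
    -- (1) `M` is injective with respect to `f`
    (∀ g : X →ₗ[Aᵐᵒᵖ] M, ∃ g' : Y →ₗ[Aᵐᵒᵖ] M, g' ∘ₗ f = g) ↔
    -- (2) every `α` vanishing on `w` factors through `w'`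
    (∀ α : ((Fin n → Aᵐᵒᵖ) × (Fin k → Aᵐᵒᵖ)) →ₗ[Aᵐᵒᵖ] M,
        α ∘ₗ (LinearMap.prod
              (a ∘ₗ LinearMap.fst Aᵐᵒᵖ (Fin m → Aᵐᵒᵖ) (Fin k → Aᵐᵒᵖ))
              ((b ∘ₗ LinearMap.fst Aᵐᵒᵖ (Fin m → Aᵐᵒᵖ) (Fin k → Aᵐᵒᵖ)) -
                LinearMap.snd Aᵐᵒᵖ (Fin m → Aᵐᵒᵖ) (Fin k → Aᵐᵒᵖ))) = 0 →
        ∃ β : (Fin l → Aᵐᵒᵖ) →ₗ[Aᵐᵒᵖ] M,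
          β ∘ₗ ((c ∘ₗ LinearMap.fst Aᵐᵒᵖ (Fin n → Aᵐᵒᵖ) (Fin k → Aᵐᵒᵖ)) -
                (d ∘ₗ LinearMap.snd Aᵐᵒᵖ (Fin n → Aᵐᵒᵖ) (Fin k → Aᵐᵒᵖ))) = α) :=
  stmt0_general a b c d p q hp hq hap hdq f hfp M
end

section
/- Let A be a ring and let f : X → Y be an A-linear map between finitely presented right A-modules. Then there exist natural numbers m, n, p and matrices U of size m × n and V of size p × m over A such that for every right A-module M the following are equivalent: (1) M is injective with respect to f; (2) for every x ∈ M^m with x U = 0 there exists y ∈ M^p with x = y V. -/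
open MulOpposite

universe u v w

/-- `xU` for a row vector `x` over a right `A`-module `M` and matrix `U` over `A`:
`(xU)_j = ∑ i, x i · U i j` using the right scalar action. -/
def vecMulMat {A : Type u} [Ring A] {M : Type*} [AddCommGroup M] [Module Aᵐᵒᵖ M]
    {m n : ℕ} (x : Fin m → M) (U : Matrix (Fin m) (Fin n) A) : Fin n → M :=
  fun j => ∑ i, op (U i j) • x i

/-!
Present `X` and `Y` over `R = Aᵐᵒᵖ` by exact sequences `Rⁿ →a Rᵐ →π X → 0` and
`R^q →b R^p →ρ Y → 0`, and lift `f ∘ π` to `T : Rᵐ → R^p`. Linear maps `X → M` are the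
`x ∈ Mᵐ` with `x·a = 0`, linear maps `Y → M` are the `y ∈ M^p` with `y·b = 0`, and
precomposition with `f` becomes `y ↦ y·T`. Hence `M` is injective with respect to `f` iff every
`x` with `x·a = 0` is `y·T` for some `y` with `y·b = 0`. Appending to `x` another `q`
coordinates, forced to vanish by an identity block in `U`, turns the side condition `y·b = 0`
into part of the single equation `x = y·[T | b]`.
-/

section Exact

variable {R : Type*} [Ring R] {F₁ F₀ X G₁ G₀ Y M : Type*}
  [AddCommGroup F₁] [Module R F₁] [AddCommGroup F₀] [Module R F₀] [AddCommGroup X] [Module R X]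
  [AddCommGroup G₁] [Module R G₁] [AddCommGroup G₀] [Module R G₀] [AddCommGroup Y] [Module R Y]
  [AddCommGroup M] [Module R M]

theorem Function.Exact.exists_comp_eq_of_comp_eq_zero {a : F₁ →ₗ[R] F₀} {π : F₀ →ₗ[R] X}
    (ha : Function.Exact a π) (hπ : Function.Surjective π) {φ : F₀ →ₗ[R] M}
    (hφ : φ ∘ₗ a = 0) : ∃ g : X →ₗ[R] M, g ∘ₗ π = φ :=
  ⟨(LinearMap.range a).liftQ φ (LinearMap.range_le_ker_iff.mpr hφ) ∘ₗ
      (ha.linearEquivOfSurjective hπ).symm.toLinearMap, by ext; simp⟩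

theorem forall_exists_comp_eq_iff_of_exact {a : F₁ →ₗ[R] F₀} {π : F₀ →ₗ[R] X}
    (ha : Function.Exact a π) (hπ : Function.Surjective π)
    {b : G₁ →ₗ[R] G₀} {ρ : G₀ →ₗ[R] Y} (hb : Function.Exact b ρ) (hρ : Function.Surjective ρ)
    {f : X →ₗ[R] Y} {T : F₀ →ₗ[R] G₀} (hT : ρ ∘ₗ T = f ∘ₗ π) :
    (∀ g : X →ₗ[R] M, ∃ g' : Y →ₗ[R] M, g' ∘ₗ f = g) ↔
      ∀ φ : F₀ →ₗ[R] M, φ ∘ₗ a = 0 → ∃ ψ : G₀ →ₗ[R] M, ψ ∘ₗ b = 0 ∧ ψ ∘ₗ T = φ := by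
  constructor
  · intro hext φ hφ
    obtain ⟨g, rfl⟩ := ha.exists_comp_eq_of_comp_eq_zero hπ hφ
    obtain ⟨g', rfl⟩ := hext g
    refine ⟨g' ∘ₗ ρ, ?_, ?_⟩
    · rw [LinearMap.comp_assoc, hb.linearMap_comp_eq_zero, LinearMap.comp_zero]
    · rw [LinearMap.comp_assoc, hT, LinearMap.comp_assoc]
  · intro hlift g
    have hga : (g ∘ₗ π) ∘ₗ a = 0 := by
      rw [LinearMap.comp_assoc, ha.linearMap_comp_eq_zero, LinearMap.comp_zero]
    obtain ⟨ψ, hψb, hψT⟩ := hlift (g ∘ₗ π) hga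
    obtain ⟨g', rfl⟩ := hb.exists_comp_eq_of_comp_eq_zero hρ hψb
    refine ⟨g', (LinearMap.cancel_right hπ).mp ?_⟩
    rw [LinearMap.comp_assoc, ← hT, ← LinearMap.comp_assoc, hψT]

end Exact

theorem Fin.append_eq_zero_iff {α : Type*} [Zero α] {m n : ℕ} {a : Fin m → α} {b : Fin n → α} :
    Fin.append a b = 0 ↔ a = 0 ∧ b = 0 := by
  simp [funext_iff, Fin.forall_fin_add]

theorem Fin.append_inj {α : Type*} {m n : ℕ} {a c : Fin m → α} {b d : Fin n → α} :
    Fin.append a b = Fin.append c d ↔ a = c ∧ b = d :=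
  ((Fin.appendEquiv m n).injective.eq_iff (a := (a, b)) (b := (c, d))).trans Prod.ext_iff

section VecMulMat

variable {A : Type*} [Ring A] {M : Type*} [AddCommGroup M] [Module Aᵐᵒᵖ M]

def Matrix.appendRows {m₁ m₂ n : ℕ} (U₁ : Matrix (Fin m₁) (Fin n) A)
    (U₂ : Matrix (Fin m₂) (Fin n) A) : Matrix (Fin (m₁ + m₂)) (Fin n) A :=
  Matrix.of fun i j => Fin.append (fun i => U₁ i j) (fun i => U₂ i j) i

def Matrix.appendCols {m n₁ n₂ : ℕ} (U₁ : Matrix (Fin m) (Fin n₁) A)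
    (U₂ : Matrix (Fin m) (Fin n₂) A) : Matrix (Fin m) (Fin (n₁ + n₂)) A :=
  Matrix.of fun i => Fin.append (U₁ i) (U₂ i)

theorem vecMulMat_zero {m n : ℕ} (x : Fin m → M) :
    vecMulMat x (0 : Matrix (Fin m) (Fin n) A) = 0 := by
  funext j; simp [vecMulMat]

theorem vecMulMat_one {m : ℕ} (x : Fin m → M) :
    vecMulMat x (1 : Matrix (Fin m) (Fin m) A) = x := by
  funext j; simp [vecMulMat, Matrix.one_apply, apply_ite op]

theorem vecMulMat_appendRows {m₁ m₂ n : ℕ} (x : Fin m₁ → M) (z : Fin m₂ → M)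
    (U₁ : Matrix (Fin m₁) (Fin n) A) (U₂ : Matrix (Fin m₂) (Fin n) A) :
    vecMulMat (Fin.append x z) (U₁.appendRows U₂) = vecMulMat x U₁ + vecMulMat z U₂ := by
  funext j; simp [vecMulMat, Matrix.appendRows, Fin.sum_univ_add]

theorem vecMulMat_appendCols {m n₁ n₂ : ℕ} (x : Fin m → M)
    (U₁ : Matrix (Fin m) (Fin n₁) A) (U₂ : Matrix (Fin m) (Fin n₂) A) :
    vecMulMat x (U₁.appendCols U₂) = Fin.append (vecMulMat x U₁) (vecMulMat x U₂) := by
  funext j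
  refine Fin.addCases (fun j => ?_) (fun j => ?_) j <;> simp [vecMulMat, Matrix.appendCols]

def Matrix.blockDiagOne {m n : ℕ} (q : ℕ) (U : Matrix (Fin m) (Fin n) A) :
    Matrix (Fin (m + q)) (Fin (n + q)) A :=
  (U.appendRows 0).appendCols ((0 : Matrix (Fin m) (Fin q) A).appendRows 1)

theorem vecMulMat_append_blockDiagOne {m n q : ℕ} (x : Fin m → M) (z : Fin q → M)
    (U : Matrix (Fin m) (Fin n) A) :
    vecMulMat (Fin.append x z) (U.blockDiagOne q) = Fin.append (vecMulMat x U) z := by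
  simp only [Matrix.blockDiagOne, vecMulMat_appendCols, vecMulMat_appendRows, vecMulMat_zero,
    vecMulMat_one, add_zero, zero_add]

theorem forall_vecMulMat_blockDiagOne_iff {m n p q : ℕ} (U : Matrix (Fin m) (Fin n) A)
    (T : Matrix (Fin p) (Fin m) A) (W : Matrix (Fin p) (Fin q) A) :
    (∀ x : Fin (m + q) → M, vecMulMat x (U.blockDiagOne q) = 0 →
        ∃ y : Fin p → M, x = vecMulMat y (T.appendCols W)) ↔
      ∀ x : Fin m → M, vecMulMat x U = 0 →
        ∃ y : Fin p → M, vecMulMat y W = 0 ∧ vecMulMat y T = x := by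
  constructor
  · intro h x hx
    obtain ⟨y, hy⟩ := h (Fin.append x 0)
      (by rw [vecMulMat_append_blockDiagOne, Fin.append_eq_zero_iff]; exact ⟨hx, rfl⟩)
    rw [vecMulMat_appendCols, Fin.append_inj] at hy
    exact ⟨y, hy.2.symm, hy.1.symm⟩
  · intro h x' hx'
    obtain ⟨x, z, rfl⟩ : ∃ x z, x' = Fin.append x z := ⟨_, _, Fin.append_castAdd_natAdd.symm⟩
    rw [vecMulMat_append_blockDiagOne, Fin.append_eq_zero_iff] at hx'
    obtain ⟨hx, rfl⟩ := hx'
    obtain ⟨y, hyW, hyT⟩ := h x hx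
    exact ⟨y, by rw [vecMulMat_appendCols, hyW, hyT]⟩

end VecMulMat

section MatrixOfLinearMap

variable {A : Type*} [Ring A] {M : Type*} [AddCommGroup M] [Module Aᵐᵒᵖ M]

def LinearMap.toMatrixUnop {m n : ℕ} (a : (Fin n → Aᵐᵒᵖ) →ₗ[Aᵐᵒᵖ] (Fin m → Aᵐᵒᵖ)) :
    Matrix (Fin m) (Fin n) A :=
  Matrix.of fun i j => unop (a (Pi.single j 1) i)

theorem constr_comp_eq_constr_vecMulMat {m n : ℕ} (x : Fin m → M)
    (a : (Fin n → Aᵐᵒᵖ) →ₗ[Aᵐᵒᵖ] (Fin m → Aᵐᵒᵖ)) :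
    (Pi.basisFun Aᵐᵒᵖ (Fin m)).constr ℕ x ∘ₗ a =
      (Pi.basisFun Aᵐᵒᵖ (Fin n)).constr ℕ (vecMulMat x a.toMatrixUnop) := by
  refine (Pi.basisFun Aᵐᵒᵖ (Fin n)).ext fun j => ?_
  simp [Module.Basis.constr_apply_fintype, vecMulMat, LinearMap.toMatrixUnop]

theorem forall_comp_eq_zero_iff_vecMulMat {m n p q : ℕ}
    (a : (Fin n → Aᵐᵒᵖ) →ₗ[Aᵐᵒᵖ] (Fin m → Aᵐᵒᵖ)) (b : (Fin q → Aᵐᵒᵖ) →ₗ[Aᵐᵒᵖ] (Fin p → Aᵐᵒᵖ))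
    (T : (Fin m → Aᵐᵒᵖ) →ₗ[Aᵐᵒᵖ] (Fin p → Aᵐᵒᵖ)) :
    (∀ φ : (Fin m → Aᵐᵒᵖ) →ₗ[Aᵐᵒᵖ] M, φ ∘ₗ a = 0 →
        ∃ ψ : (Fin p → Aᵐᵒᵖ) →ₗ[Aᵐᵒᵖ] M, ψ ∘ₗ b = 0 ∧ ψ ∘ₗ T = φ) ↔
      ∀ x : Fin m → M, vecMulMat x a.toMatrixUnop = 0 →
        ∃ y : Fin p → M, vecMulMat y b.toMatrixUnop = 0 ∧ vecMulMat y T.toMatrixUnop = x := by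
  simp only [((Pi.basisFun Aᵐᵒᵖ (Fin m)).constr ℕ).surjective.forall,
    ((Pi.basisFun Aᵐᵒᵖ (Fin p)).constr ℕ).surjective.exists, constr_comp_eq_constr_vecMulMat,
    LinearEquiv.map_eq_zero_iff, EmbeddingLike.apply_eq_iff_eq]

end MatrixOfLinearMap

/-- for any `A`-linear map `f : X → Y` between finitely presented
right `A`-modules there are matrices `U` (of size `m × n`) and `V` (of size `p × m`)
over `A` such that a right `A`-module `M` is injective with respect to `f` if and only
if every `x ∈ M^m` with `xU = 0` is of the form `yV` for some `y ∈ M^p`. -/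
theorem stmt6 (A : Type u) [Ring A]
    {X : Type v} [AddCommGroup X] [Module Aᵐᵒᵖ X] [Module.FinitePresentation Aᵐᵒᵖ X]
    {Y : Type v} [AddCommGroup Y] [Module Aᵐᵒᵖ Y] [Module.FinitePresentation Aᵐᵒᵖ Y]
    (f : X →ₗ[Aᵐᵒᵖ] Y) :
    ∃ (m n p : ℕ) (U : Matrix (Fin m) (Fin n) A) (V : Matrix (Fin p) (Fin m) A),
      ∀ (M : Type w) [AddCommGroup M] [Module Aᵐᵒᵖ M],
        (∀ g : X →ₗ[Aᵐᵒᵖ] M, ∃ g' : Y →ₗ[Aᵐᵒᵖ] M, g' ∘ₗ f = g) ↔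
        (∀ x : Fin m → M, vecMulMat x U = 0 → ∃ y : Fin p → M, x = vecMulMat y V) := by
  obtain ⟨m, n, π, a, hπ, ha⟩ := Module.FinitePresentation.exists_fin' Aᵐᵒᵖ X
  obtain ⟨p, q, ρ, b, hρ, hb⟩ := Module.FinitePresentation.exists_fin' Aᵐᵒᵖ Y
  obtain ⟨T, hT⟩ := Module.projective_lifting_property ρ (f ∘ₗ π) hρ
  refine ⟨m + q, n + q, p, a.toMatrixUnop.blockDiagOne q,
    T.toMatrixUnop.appendCols b.toMatrixUnop, fun M _ _ => ?_⟩
  rw [forall_exists_comp_eq_iff_of_exact ha hπ hb hρ hT, forall_comp_eq_zero_iff_vecMulMat,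
    forall_vecMulMat_blockDiagOne_iff]
end

section
/- Let A be a ring, and let U be an m × n matrix and V a p × m matrix over A. Let u : A^n → A^m and v : A^m → A^p be the A-linear maps between free right A-modules given by left multiplication by U and V respectively on column vectors. Set X := A^m / range(u) and Y := A^p / range(v ∘ u), and let f : X → Y be the A-linear map induced by v. Then X and Y are finitely presented right A-modules, and for every right A-module M the following are equivalent: (1) for every x ∈ M^m with x U = 0 there exists y ∈ M^p with x = y V; (2) M is injective with respect to f. -/
/-!
A linear map `g` out of `A^m / range u` is the same thing as a row vector `x ∈ M^m` with
`xU = 0`, namely the values of `g` on the images of the basis vectors, and precomposing with `f`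
turns the vector `y` of a map out of `A^p / range (v ∘ u)` into `yV`. Under this dictionary the
extension property along `f` becomes the matrix condition.
-/

open MulOpposite

universe u w

/-- The `A`-linear map `A^n → A^m` of free right `A`-modules given by left multiplication
by the `m × n` matrix `U` on column vectors: the `i`-th entry of `U·x` is `∑ j, U i j * x j`
(computed in `A`); it sends the basis vector `e j` to `∑ i, e i · U i j`. -/
def matMulVecLin {A : Type u} [Ring A] {m n : ℕ} (U : Matrix (Fin m) (Fin n) A) :
    (Fin n → Aᵐᵒᵖ) →ₗ[Aᵐᵒᵖ] (Fin m → Aᵐᵒᵖ) where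
  toFun x := fun i => ∑ j, x j * op (U i j)
  map_add' x y := by
    funext i
    simp [add_mul, Finset.sum_add_distrib]
  map_smul' c x := by
    funext i
    simp [smul_eq_mul, Finset.mul_sum, mul_assoc]

theorem Module.finitePresentation_quotient_range {R : Type*} [Ring R] {M N : Type*}
    [AddCommGroup M] [Module R M] [AddCommMonoid N] [Module R N]
    [Module.FinitePresentation R M] [Module.Finite R N] (f : N →ₗ[R] M) :
    Module.FinitePresentation R (M ⧸ LinearMap.range f) := by
  refine Module.finitePresentation_of_surjective _ (Submodule.mkQ_surjective _) ?_
  rw [Submodule.ker_mkQ, LinearMap.range_eq_map]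
  exact Module.Finite.fg_top.map f

section LinearCombination

variable {R M α : Type*} [Fintype α] [AddCommMonoid M]

theorem Fintype.linearCombination_inj [Semiring R] [Module R M] {x y : α → M} :
    Fintype.linearCombination R x = Fintype.linearCombination R y ↔ x = y := by
  classical
  refine ⟨fun h => funext fun i => ?_, congrArg _⟩
  simpa using LinearMap.congr_fun h (Pi.single i 1)

theorem Fintype.linearCombination_zero [Semiring R] [Module R M] :
    Fintype.linearCombination R (0 : α → M) = 0 := by
  ext
  simp [Fintype.linearCombination_apply]

theorem Fintype.linearCombination_eq_zero_iff [Semiring R] [Module R M] {x : α → M} :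
    Fintype.linearCombination R x = 0 ↔ x = 0 := by
  rw [← Fintype.linearCombination_zero, Fintype.linearCombination_inj]

theorem comp_mkQ_eq_linearCombination [Ring R] [Module R M] [DecidableEq α]
    {N : Submodule R (α → R)} (g : ((α → R) ⧸ N) →ₗ[R] M) :
    g ∘ₗ N.mkQ = Fintype.linearCombination R (fun i => g (N.mkQ (Pi.single i 1))) := by
  ext i
  simp

end LinearCombination

section Matrix

variable {A : Type u} [Ring A] {M : Type w} [AddCommGroup M] [Module Aᵐᵒᵖ M]

theorem linearCombination_comp_matMulVecLin {m n : ℕ} (x : Fin m → M)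
    (U : Matrix (Fin m) (Fin n) A) :
    Fintype.linearCombination Aᵐᵒᵖ x ∘ₗ matMulVecLin U =
      Fintype.linearCombination Aᵐᵒᵖ (vecMulMat x U) := by
  refine LinearMap.ext fun w => ?_
  simp only [LinearMap.comp_apply, Fintype.linearCombination_apply, matMulVecLin, vecMulMat,
    LinearMap.coe_mk, AddHom.coe_mk, Finset.sum_smul, mul_smul, Finset.smul_sum]
  exact Finset.sum_comm

theorem linearCombination_comp_matMulVecLin_eq_zero_iff {m n : ℕ} {x : Fin m → M}
    {U : Matrix (Fin m) (Fin n) A} :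
    Fintype.linearCombination Aᵐᵒᵖ x ∘ₗ matMulVecLin U = 0 ↔ vecMulMat x U = 0 := by
  rw [linearCombination_comp_matMulVecLin, Fintype.linearCombination_eq_zero_iff]

end Matrix

/-- with `X := A^m / range u` and `Y := A^p / range (v ∘ u)` where
`u = U·(-)` and `v = V·(-)`, both `X` and `Y` are finitely presented, and a right
`A`-module `M` satisfies the matrix condition for `(U, V)` iff it is injective with
respect to the induced map `f : X → Y`. -/
theorem stmt7 (A : Type u) [Ring A] {m n p : ℕ}
    (U : Matrix (Fin m) (Fin n) A) (V : Matrix (Fin p) (Fin m) A) :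
    Module.FinitePresentation Aᵐᵒᵖ
      ((Fin m → Aᵐᵒᵖ) ⧸ LinearMap.range (matMulVecLin U)) ∧
    Module.FinitePresentation Aᵐᵒᵖ
      ((Fin p → Aᵐᵒᵖ) ⧸ LinearMap.range (matMulVecLin V ∘ₗ matMulVecLin U)) ∧
    ∀ (M : Type w) [AddCommGroup M] [Module Aᵐᵒᵖ M],
      (∀ x : Fin m → M, vecMulMat x U = 0 → ∃ y : Fin p → M, x = vecMulMat y V) ↔
      (∀ g : ((Fin m → Aᵐᵒᵖ) ⧸ LinearMap.range (matMulVecLin U)) →ₗ[Aᵐᵒᵖ] M,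
        ∃ g' : ((Fin p → Aᵐᵒᵖ) ⧸ LinearMap.range (matMulVecLin V ∘ₗ matMulVecLin U))
            →ₗ[Aᵐᵒᵖ] M,
          g' ∘ₗ (Submodule.mapQ (LinearMap.range (matMulVecLin U))
              (LinearMap.range (matMulVecLin V ∘ₗ matMulVecLin U)) (matMulVecLin V)
              (by rintro x ⟨y, rfl⟩; exact ⟨y, rfl⟩)) = g) := by
  refine ⟨Module.finitePresentation_quotient_range _,
    Module.finitePresentation_quotient_range _, fun M _ _ => ⟨fun H g => ?_, fun H x hx => ?_⟩⟩
  · set x : Fin m → M := fun i => g (Submodule.mkQ _ (Pi.single i 1))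
    have hg := comp_mkQ_eq_linearCombination g
    have hxU : vecMulMat x U = 0 := by
      rw [← linearCombination_comp_matMulVecLin_eq_zero_iff, ← hg, LinearMap.comp_assoc,
        LinearMap.range_mkQ_comp, LinearMap.comp_zero]
    obtain ⟨y, hxy⟩ := H x hxU
    have hy : LinearMap.range (matMulVecLin V ∘ₗ matMulVecLin U) ≤
        LinearMap.ker (Fintype.linearCombination Aᵐᵒᵖ y) := by
      rw [LinearMap.range_le_ker_iff, ← LinearMap.comp_assoc, linearCombination_comp_matMulVecLin,
        linearCombination_comp_matMulVecLin_eq_zero_iff, ← hxy, hxU]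
    refine ⟨Submodule.liftQ _ _ hy, Submodule.linearMap_qext _ ?_⟩
    rw [LinearMap.comp_assoc, Submodule.mapQ_mkQ, ← LinearMap.comp_assoc,
      Submodule.liftQ_mkQ, linearCombination_comp_matMulVecLin, hg, ← hxy]
  · have hxU := LinearMap.range_le_ker_iff.mpr
      (linearCombination_comp_matMulVecLin_eq_zero_iff.mpr hx)
    obtain ⟨g', hg'⟩ := H (Submodule.liftQ _ _ hxU)
    refine ⟨fun i => g' (Submodule.mkQ _ (Pi.single i 1)), ?_⟩
    rw [← Fintype.linearCombination_inj (R := Aᵐᵒᵖ), ← linearCombination_comp_matMulVecLin,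
      ← comp_mkQ_eq_linearCombination, ← Submodule.liftQ_mkQ _ _ hxU, ← hg',
      LinearMap.comp_assoc, LinearMap.comp_assoc, Submodule.mapQ_mkQ]
end

section
/- Let A be a ring. Let (U_i, V_i)_{i ∈ I} and (U'_j, V'_j)_{j ∈ J} be two families of pairs of matrices over A, where each U has size m × n and the corresponding V has size p × m (sizes depending on the index). Suppose that the two families define the same class of right A-modules, i.e. for every right A-module M one has [for all i ∈ I and all x ∈ M^{m_i}, x U_i = 0 implies x = y V_i for some y ∈ M^{p_i}] if and only if [for all j ∈ J and all x ∈ M^{m'_j}, x U'_j = 0 implies x = y V'_j for some y ∈ M^{p'_j}]. Then the swapped families define the same class of left A-modules, i.e. for every left A-module N one has [for all i ∈ I and all x ∈ N^{m_i}, V_i x = 0 implies x = U_i y for some y ∈ N^{n_i}] if and only if [for all j ∈ J and all x ∈ N^{m'_j}, V'_j x = 0 implies x = U'_j y for some y ∈ N^{n'_j}]. -/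
open MulOpposite

universe u

/-- `Vx` for a column vector `x` over a left `A`-module `N` and matrix `V` over `A`:
`(Vx)_k = ∑ i, V k i • x i` using the left scalar action. -/
def matVecMul {A : Type u} [Ring A] {N : Type*} [AddCommGroup N] [Module A N]
    {p m : ℕ} (V : Matrix (Fin p) (Fin m) A) (x : Fin m → N) : Fin p → N :=
  fun k => ∑ i, V k i • x i

namespace CharacterModule

section Duality

variable {B C D : Type*} [AddCommGroup B] [AddCommGroup C] [AddCommGroup D]

/- `c` descends to `C ⧸ ker g`, which embeds into `D` via `g`; characters extend along
injections because `ℚ/ℤ` is divisible. -/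
theorem exists_comp_eq_of_ker_le (g : C →+ D) (c : C →+ AddCircle (1 : ℚ))
    (hc : g.ker ≤ c.ker) :
    ∃ ψ : D →+ AddCircle (1 : ℚ), ψ.comp g = c := by
  obtain ⟨ψ, hψ⟩ := dual_surjective_of_injective (QuotientAddGroup.kerLift g).toIntLinearMap
    (QuotientAddGroup.kerLift_injective g) (QuotientAddGroup.lift g.ker c hc)
  exact ⟨ψ, AddMonoidHom.ext fun x => DFunLike.congr_fun hψ (x : C ⧸ g.ker)⟩

theorem ker_le_range_iff (f : B →+ C) (g : C →+ D) :
    g.ker ≤ f.range ↔ ∀ c : C →+ AddCircle (1 : ℚ), c.comp f = 0 →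
      ∃ ψ : D →+ AddCircle (1 : ℚ), ψ.comp g = c := by
  refine ⟨fun h c hc => exists_comp_eq_of_ker_le g c ?_, fun h x hx => ?_⟩
  · rintro x hx
    obtain ⟨y, rfl⟩ := h hx
    exact DFunLike.congr_fun hc y
  · by_contra hxf
    have hx' : (x : C ⧸ f.range) ≠ 0 := by rwa [Ne, QuotientAddGroup.eq_zero_iff]
    obtain ⟨c, hcx⟩ := exists_character_apply_ne_zero_of_ne_zero hx'
    obtain ⟨ψ, hψ⟩ := h ((c : C ⧸ f.range →+ _).comp (QuotientAddGroup.mk' f.range)) <|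
      AddMonoidHom.ext fun y =>
        (congrArg c ((QuotientAddGroup.eq_zero_iff _).2 ⟨y, rfl⟩)).trans (map_zero c)
    apply hcx
    calc c x = ψ (g x) := (DFunLike.congr_fun hψ x).symm
      _ = 0 := by rw [AddMonoidHom.mem_ker.1 hx, map_zero]

end Duality

variable {A : Type*} [Ring A] {N : Type*} [AddCommGroup N]

instance [Module A N] : Module Aᵐᵒᵖ (CharacterModule N) :=
  inferInstanceAs (Module Aᵈᵐᵃ (N →+ AddCircle (1 : ℚ)))

theorem op_smul_apply [Module A N] (a : A) (c : CharacterModule N) (z : N) :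
    (op a • c) z = c (a • z) := rfl

theorem sum_apply {ι : Type*} (s : Finset ι) (c : ι → CharacterModule N) (z : N) :
    (∑ i ∈ s, c i) z = ∑ i ∈ s, c i z :=
  AddMonoidHom.finsetSum_apply (M := N) c s z

variable {ι : Type*} [Fintype ι] [DecidableEq ι]

noncomputable def piEquiv :
    (ι → CharacterModule N) ≃+ ((ι → N) →+ AddCircle (1 : ℚ)) where
  toFun c := AddMonoidHom.mk' (fun w => ∑ i, c i (w i)) fun w w' => by
    simp only [Pi.add_apply, map_add, Finset.sum_add_distrib]
  invFun ψ i := ψ.comp (AddMonoidHom.single (fun _ => N) i)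
  left_inv c := by
    funext i
    ext z
    show ∑ j, c j ((Pi.single i z : ι → N) j) = c i z
    simp [Pi.single_apply, apply_ite (c _)]
  right_inv ψ := AddMonoidHom.ext fun w => by
    show ∑ i, ψ (Pi.single i (w i)) = ψ w
    rw [← map_sum, Finset.univ_sum_single]
  map_add' c c' := AddMonoidHom.ext fun w => Finset.sum_add_distrib

end CharacterModule

section MatrixDuality

variable {A : Type*} [Ring A] {N : Type*} [AddCommGroup N] [Module A N] {m n p : ℕ}

def matVecMulHom (V : Matrix (Fin p) (Fin m) A) : (Fin m → N) →+ (Fin p → N) :=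
  AddMonoidHom.mk' (matVecMul V) fun x y => funext fun k => by
    simp only [matVecMul, Pi.add_apply, smul_add, Finset.sum_add_distrib]

theorem piEquiv_vecMulMat (c : Fin m → CharacterModule N) (U : Matrix (Fin m) (Fin n) A) :
    CharacterModule.piEquiv (vecMulMat c U) =
      (CharacterModule.piEquiv c).comp (matVecMulHom U) := AddMonoidHom.ext fun w => by
  show ∑ j, (∑ i, op (U i j) • c i) (w j) = ∑ i, c i (∑ j, U i j • w j)
  simp only [CharacterModule.sum_apply, CharacterModule.op_smul_apply, map_sum]
  exact Finset.sum_comm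

theorem forall_exists_matVecMul_iff_characterModule (U : Matrix (Fin m) (Fin n) A)
    (V : Matrix (Fin p) (Fin m) A) :
    (∀ x : Fin m → N, matVecMul V x = 0 → ∃ y : Fin n → N, x = matVecMul U y) ↔
      ∀ x : Fin m → CharacterModule N, vecMulMat x U = 0 →
        ∃ y : Fin p → CharacterModule N, x = vecMulMat y V := by
  have hker :
      (∀ x : Fin m → N, matVecMul V x = 0 → ∃ y : Fin n → N, x = matVecMul U y) ↔
        (matVecMulHom V).ker ≤ (matVecMulHom (N := N) U).range :=
    forall_congr' fun _ => imp_congr_right fun _ => exists_congr fun _ => eq_comm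
  rw [hker, CharacterModule.ker_le_range_iff, CharacterModule.piEquiv.surjective.forall]
  refine forall_congr' fun x => ?_
  rw [← piEquiv_vecMulMat, AddEquivClass.map_eq_zero_iff,
    CharacterModule.piEquiv.surjective.exists]
  simp only [← piEquiv_vecMulMat, EmbeddingLike.apply_eq_iff_eq, @eq_comm _ _ x]

end MatrixDuality

/-- if two families of pairs of matrices define the same class of right
`A`-modules, then the swapped families define the same class of left `A`-modules. -/
theorem stmt9 (A : Type u) [Ring A]
    {I : Type*} {m n p : I → ℕ}
    (U : ∀ i, Matrix (Fin (m i)) (Fin (n i)) A)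
    (V : ∀ i, Matrix (Fin (p i)) (Fin (m i)) A)
    {J : Type*} {m' n' p' : J → ℕ}
    (U' : ∀ j, Matrix (Fin (m' j)) (Fin (n' j)) A)
    (V' : ∀ j, Matrix (Fin (p' j)) (Fin (m' j)) A)
    (h : ∀ (M : Type u) [AddCommGroup M] [Module Aᵐᵒᵖ M],
      (∀ i (x : Fin (m i) → M), vecMulMat x (U i) = 0 →
          ∃ y : Fin (p i) → M, x = vecMulMat y (V i)) ↔
      (∀ j (x : Fin (m' j) → M), vecMulMat x (U' j) = 0 →
          ∃ y : Fin (p' j) → M, x = vecMulMat y (V' j))) :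
    ∀ (N : Type u) [AddCommGroup N] [Module A N],
      (∀ i (x : Fin (m i) → N), matVecMul (V i) x = 0 →
          ∃ y : Fin (n i) → N, x = matVecMul (U i) y) ↔
      (∀ j (x : Fin (m' j) → N), matVecMul (V' j) x = 0 →
          ∃ y : Fin (n' j) → N, x = matVecMul (U' j) y) := by
  intro N _ _
  simp only [forall_exists_matVecMul_iff_characterModule]
  exact h (CharacterModule N)
end

section
/- Let A be a ring. The assignment sending the definable class of right A-modules defined by a family of pairs of matrices (U_i, V_i)_{i ∈ I} (U_i of size m_i × n_i, V_i of size p_i × m_i) to the class of left A-modules defined by the swapped family (V_i, U_i)_{i ∈ I} — namely, the class of left A-modules N such that for every i ∈ I and every x ∈ N^{m_i} with V_i x = 0 there exists y ∈ N^{n_i} with x = U_i y — is a well-defined, inclusion-preserving bijection from the set of definable classes of right A-modules onto the set of definable classes of left A-modules, whose inverse is given by the analogous swapping construction on families of matrix pairs defining classes of left A-modules. -/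
open MulOpposite CategoryTheory

universe u

/-- The class of right `A`-modules defined by the family of pairs of matrices
`(U i, V i)_{i ∈ I}` (`U i` of size `m i × n i`, `V i` of size `p i × m i`). -/
def rightClass (A : Type u) [Ring A] {I : Type u} (m n p : I → ℕ)
    (U : ∀ i, Matrix (Fin (m i)) (Fin (n i)) A)
    (V : ∀ i, Matrix (Fin (p i)) (Fin (m i)) A) :
    ModuleCat.{u} Aᵐᵒᵖ → Prop :=
  fun M => ∀ i (x : Fin (m i) → M), vecMulMat x (U i) = 0 →
    ∃ y : Fin (p i) → M, x = vecMulMat y (V i)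

/-- The class of left `A`-modules defined by the swapped family `(V i, U i)_{i ∈ I}`:
`N` belongs to it iff for every `i` and `x ∈ N^{m i}` with `V i · x = 0` there is
`y ∈ N^{n i}` with `x = U i · y`. -/
def leftClass (A : Type u) [Ring A] {I : Type u} (m n p : I → ℕ)
    (U : ∀ i, Matrix (Fin (m i)) (Fin (n i)) A)
    (V : ∀ i, Matrix (Fin (p i)) (Fin (m i)) A) :
    ModuleCat.{u} A → Prop :=
  fun N => ∀ i (x : Fin (m i) → N), matVecMul (V i) x = 0 →
    ∃ y : Fin (n i) → N, x = matVecMul (U i) y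

/-- A class of right `A`-modules is definable iff it is the class defined by some family
of pairs of matrices (the characterization of definability used here). -/
def IsDefinableRight (A : Type u) [Ring A] (D : ModuleCat.{u} Aᵐᵒᵖ → Prop) : Prop :=
  ∃ (I : Type u) (m n p : I → ℕ)
    (U : ∀ i, Matrix (Fin (m i)) (Fin (n i)) A)
    (V : ∀ i, Matrix (Fin (p i)) (Fin (m i)) A),
    D = rightClass A m n p U V

/-- A class of left `A`-modules is definable iff it is the class defined by some family
of pairs of matrices with the left-handed matrix condition. -/
def IsDefinableLeft (A : Type u) [Ring A] (E : ModuleCat.{u} A → Prop) : Prop :=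
  ∃ (I : Type u) (m n p : I → ℕ)
    (U : ∀ i, Matrix (Fin (m i)) (Fin (n i)) A)
    (V : ∀ i, Matrix (Fin (p i)) (Fin (m i)) A),
    E = leftClass A m n p U V

/-!
A left module `N` satisfies the condition `V x = 0 → x ∈ U N^n` exactly when its character
module `N⁺ = Hom(N, ℚ/ℤ)`, a right module, satisfies `f U = 0 → f ∈ N⁺^p V`, and symmetrically
for right modules. Indeed, the pairing `⟨f, x⟩ = ∑ fᵢ(xᵢ)` identifies `(N⁺)^k` with `(N^k)⁺` and
turns multiplication by a matrix on one side into its dual on the other, while `ℚ/ℤ` is an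
injective cogenerator, so `ker β ⊆ im α` holds iff `ker α⁺ ⊆ im β⁺`. Hence the swapped family
defines the class of left modules whose character module lies in the given class, which shows
that the assignment is well defined, and taking character modules the other way inverts it.
-/

open MulOpposite

local notation "ℚ/ℤ" => AddCircle (1 : ℚ)

section Characters

variable {X Y Z : Type*} [AddCommGroup X] [AddCommGroup Y] [AddCommGroup Z]

theorem AddMonoidHom.exists_comp_eq_of_ker_le (β : Y →+ Z) (φ : Y →+ ℚ/ℤ)
    (h : β.ker ≤ φ.ker) : ∃ ψ : Z →+ ℚ/ℤ, ψ.comp β = φ := by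
  obtain ⟨ψ, hψ⟩ := (Module.Baer.of_divisible _).extension_property_addMonoidHom
    β.range.subtype Subtype.val_injective
    (β.rangeRestrict.liftOfSurjective β.rangeRestrict_surjective
      ⟨φ, by rwa [AddMonoidHom.ker_rangeRestrict]⟩)
  refine ⟨ψ, AddMonoidHom.ext fun y => ?_⟩
  simpa using DFunLike.congr_fun hψ (β.rangeRestrict y)

theorem AddSubgroup.exists_character_le_ker_apply_ne_zero (H : AddSubgroup Y) {y : Y}
    (hy : y ∉ H) : ∃ φ : Y →+ ℚ/ℤ, H ≤ φ.ker ∧ φ y ≠ 0 := by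
  obtain ⟨c, hc⟩ := CharacterModule.exists_character_apply_ne_zero_of_ne_zero
    (mt (QuotientAddGroup.eq_zero_iff y).mp hy)
  refine ⟨(c : Y ⧸ H →+ ℚ/ℤ).comp (QuotientAddGroup.mk' H), fun h hh => ?_, hc⟩
  change c (QuotientAddGroup.mk h) = 0
  rw [(QuotientAddGroup.eq_zero_iff h).mpr hh, map_zero]

theorem AddMonoidHom.ker_le_range_iff_characters (α : X →+ Y) (β : Y →+ Z) :
    β.ker ≤ α.range ↔
      ∀ φ : Y →+ ℚ/ℤ, φ.comp α = 0 → ∃ ψ : Z →+ ℚ/ℤ, ψ.comp β = φ := by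
  constructor
  · intro h φ hφ
    refine β.exists_comp_eq_of_ker_le φ (h.trans ?_)
    rintro _ ⟨x, rfl⟩
    exact DFunLike.congr_fun hφ x
  · intro h y hy
    by_contra hα
    obtain ⟨φ, hφα, hφy⟩ := α.range.exists_character_le_ker_apply_ne_zero hα
    obtain ⟨ψ, rfl⟩ := h φ (AddMonoidHom.ext fun x => hφα ⟨x, rfl⟩)
    exact hφy (by rw [AddMonoidHom.comp_apply, AddMonoidHom.mem_ker.mp hy, map_zero])

end Characters

section Pairing

def AddMonoidHom.piHomEquiv (ι M B : Type*) [Fintype ι] [DecidableEq ι] [AddCommMonoid M]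
    [AddCommMonoid B] : (ι → (M →+ B)) ≃+ ((ι → M) →+ B) where
  toFun f := ∑ i, (f i).comp (Pi.evalAddMonoidHom _ i)
  invFun φ i := φ.comp (AddMonoidHom.single (fun _ => M) i)
  left_inv f := by
    funext i
    ext z
    simp [AddMonoidHom.finsetSum_apply, Pi.single_apply, apply_ite]
  right_inv φ := by
    ext i z
    simp [AddMonoidHom.finsetSum_apply, ← map_sum, Finset.univ_sum_single]
  map_add' f g := by
    simp [Finset.sum_add_distrib, AddMonoidHom.add_comp]

@[simp]
theorem AddMonoidHom.piHomEquiv_apply {ι M B : Type*} [Fintype ι] [DecidableEq ι]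
    [AddCommMonoid M] [AddCommMonoid B]
    (f : ι → (M →+ B)) (x : ι → M) : piHomEquiv ι M B f x = ∑ i, f i (x i) := by
  simp [piHomEquiv, AddMonoidHom.finsetSum_apply]

variable {ι κ μ : Type*} [Fintype ι] [DecidableEq ι] [Fintype κ] [DecidableEq κ]
  [Fintype μ] [DecidableEq μ]

theorem AddMonoidHom.ker_le_range_iff_of_adjoint {M : Type*} [AddCommGroup M]
    (α : (ι → M) →+ (κ → M)) (β : (κ → M) →+ (μ → M))
    (α' : (κ → (M →+ ℚ/ℤ)) →+ (ι → (M →+ ℚ/ℤ)))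
    (β' : (μ → (M →+ ℚ/ℤ)) →+ (κ → (M →+ ℚ/ℤ)))
    (hα : ∀ f, piHomEquiv _ _ _ (α' f) = (piHomEquiv _ _ _ f).comp α)
    (hβ : ∀ g, piHomEquiv _ _ _ (β' g) = (piHomEquiv _ _ _ g).comp β) :
    β.ker ≤ α.range ↔ α'.ker ≤ β'.range := by
  set e := piHomEquiv κ M ℚ/ℤ
  rw [ker_le_range_iff_characters]
  constructor
  · intro h f hf
    obtain ⟨ψ, hψ⟩ := h (e f) (by rw [← hα, mem_ker.mp hf, map_zero])
    exact ⟨(piHomEquiv μ M ℚ/ℤ).symm ψ, e.injective (by rw [hβ, AddEquiv.apply_symm_apply, hψ])⟩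
  · intro h φ hφ
    have hker : e.symm φ ∈ α'.ker :=
      (piHomEquiv ι M ℚ/ℤ).injective (by rw [hα, e.apply_symm_apply, hφ, map_zero])
    obtain ⟨g, hg⟩ := h hker
    exact ⟨piHomEquiv μ M ℚ/ℤ g, by rw [← hβ, hg, e.apply_symm_apply]⟩

end Pairing

namespace Matrix

variable {A : Type u} [Ring A] {m n : ℕ}

def vecMulMatHom (M : Type*) [AddCommGroup M] [Module Aᵐᵒᵖ M]
    (U : Matrix (Fin m) (Fin n) A) : (Fin m → M) →+ (Fin n → M) :=
  AddMonoidHom.mk' (vecMulMat · U) fun x y => by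
    funext j
    simp [vecMulMat, smul_add, Finset.sum_add_distrib]

def matVecMulHom (N : Type*) [AddCommGroup N] [Module A N]
    (V : Matrix (Fin m) (Fin n) A) : (Fin n → N) →+ (Fin m → N) :=
  AddMonoidHom.mk' (matVecMul V) fun x y => by
    funext k
    simp [matVecMul, smul_add, Finset.sum_add_distrib]

end Matrix

section CharacterModules

variable {A : Type u} [Ring A]

-- Both structures precompose with the action on the source:
-- `(a • f) z = f (op a • z)`, resp. `(a • f) z = f (a.unop • z)`.
instance AddMonoidHom.moduleOfRightModule {M : Type*} [AddCommGroup M] [Module Aᵐᵒᵖ M] :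
    Module A (M →+ ℚ/ℤ) :=
  Module.compHom (R := Aᵐᵒᵖᵈᵐᵃ) _ (RingEquiv.opOp A).toRingHom

instance AddMonoidHom.moduleOfLeftModule {N : Type*} [AddCommGroup N] [Module A N] :
    Module Aᵐᵒᵖ (N →+ ℚ/ℤ) :=
  Module.compHom (R := Aᵈᵐᵃ) _ (RingHom.id Aᵐᵒᵖ)

theorem piHomEquiv_matVecMul {M : Type*} [AddCommGroup M] [Module Aᵐᵒᵖ M] {m p : ℕ}
    (V : Matrix (Fin p) (Fin m) A) (f : Fin m → (M →+ ℚ/ℤ)) :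
    AddMonoidHom.piHomEquiv _ _ _ (matVecMul V f) =
      (AddMonoidHom.piHomEquiv _ _ _ f).comp (Matrix.vecMulMatHom M V) := by
  ext y
  simp only [AddMonoidHom.piHomEquiv_apply, AddMonoidHom.comp_apply, Matrix.vecMulMatHom,
    AddMonoidHom.mk'_apply, vecMulMat, matVecMul, map_sum, AddMonoidHom.finsetSum_apply]
  exact Finset.sum_comm

theorem piHomEquiv_vecMulMat {N : Type*} [AddCommGroup N] [Module A N] {m p : ℕ}
    (W : Matrix (Fin m) (Fin p) A) (f : Fin m → (N →+ ℚ/ℤ)) :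
    AddMonoidHom.piHomEquiv _ _ _ (vecMulMat f W) =
      (AddMonoidHom.piHomEquiv _ _ _ f).comp (Matrix.matVecMulHom N W) := by
  ext y
  simp only [AddMonoidHom.piHomEquiv_apply, AddMonoidHom.comp_apply, Matrix.matVecMulHom,
    AddMonoidHom.mk'_apply, vecMulMat, matVecMul, map_sum, AddMonoidHom.finsetSum_apply]
  exact Finset.sum_comm

end CharacterModules

section DefinableClasses

variable {A : Type u} [Ring A] {I : Type u} {m n p : I → ℕ}
  {U : ∀ i, Matrix (Fin (m i)) (Fin (n i)) A} {V : ∀ i, Matrix (Fin (p i)) (Fin (m i)) A}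

theorem rightClass_iff_ker_le_range (M : ModuleCat.{u} Aᵐᵒᵖ) :
    rightClass A m n p U V M ↔
      ∀ i, (Matrix.vecMulMatHom M (U i)).ker ≤ (Matrix.vecMulMatHom M (V i)).range := by
  simp [rightClass, SetLike.le_def, eq_comm, Matrix.vecMulMatHom]

theorem leftClass_iff_ker_le_range (N : ModuleCat.{u} A) :
    leftClass A m n p U V N ↔
      ∀ i, (Matrix.matVecMulHom N (V i)).ker ≤ (Matrix.matVecMulHom N (U i)).range := by
  simp [leftClass, SetLike.le_def, eq_comm, Matrix.matVecMulHom]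

def ModuleCat.charactersOfLeft (N : ModuleCat.{u} A) : ModuleCat.{u} Aᵐᵒᵖ :=
  ModuleCat.of Aᵐᵒᵖ (N →+ ℚ/ℤ)

def ModuleCat.charactersOfRight (M : ModuleCat.{u} Aᵐᵒᵖ) : ModuleCat.{u} A :=
  ModuleCat.of A (M →+ ℚ/ℤ)

theorem rightClass_comp_charactersOfLeft :
    rightClass A m n p U V ∘ ModuleCat.charactersOfLeft = leftClass A m n p U V := by
  funext N
  refine propext ((rightClass_iff_ker_le_range _).trans
    (Iff.trans ?_ (leftClass_iff_ker_le_range N).symm))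
  exact forall_congr' fun i => (AddMonoidHom.ker_le_range_iff_of_adjoint _ _ _ _
    (piHomEquiv_vecMulMat (U i)) (piHomEquiv_vecMulMat (V i))).symm

theorem leftClass_comp_charactersOfRight :
    leftClass A m n p U V ∘ ModuleCat.charactersOfRight = rightClass A m n p U V := by
  funext M
  refine propext ((leftClass_iff_ker_le_range _).trans
    (Iff.trans ?_ (rightClass_iff_ker_le_range M).symm))
  exact forall_congr' fun i => (AddMonoidHom.ker_le_range_iff_of_adjoint _ _ _ _
    (piHomEquiv_matVecMul (V i)) (piHomEquiv_matVecMul (U i))).symm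

theorem IsDefinableRight.comp_charactersOfLeft {D : ModuleCat.{u} Aᵐᵒᵖ → Prop}
    (hD : IsDefinableRight A D) : IsDefinableLeft A (D ∘ ModuleCat.charactersOfLeft) := by
  obtain ⟨I, m, n, p, U, V, rfl⟩ := hD
  exact ⟨I, m, n, p, U, V, rightClass_comp_charactersOfLeft⟩

theorem IsDefinableLeft.comp_charactersOfRight {E : ModuleCat.{u} A → Prop}
    (hE : IsDefinableLeft A E) : IsDefinableRight A (E ∘ ModuleCat.charactersOfRight) := by
  obtain ⟨I, m, n, p, U, V, rfl⟩ := hE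
  exact ⟨I, m, n, p, U, V, leftClass_comp_charactersOfRight⟩

end DefinableClasses

/-- sending the definable class of right `A`-modules defined by the family
`(U_i, V_i)` to the class of left `A`-modules defined by the swapped family `(V_i, U_i)`
is a well-defined, inclusion-preserving bijection whose inverse is given by the analogous
swapping construction. -/
theorem stmt11 (A : Type u) [Ring A] :
    ∃ (Φ : {D : ModuleCat.{u} Aᵐᵒᵖ → Prop // IsDefinableRight A D} →
        {E : ModuleCat.{u} A → Prop // IsDefinableLeft A E})
      (Ψ : {E : ModuleCat.{u} A → Prop // IsDefinableLeft A E} →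
        {D : ModuleCat.{u} Aᵐᵒᵖ → Prop // IsDefinableRight A D}),
      Function.LeftInverse Ψ Φ ∧ Function.RightInverse Ψ Φ ∧
      (∀ D D' : {D : ModuleCat.{u} Aᵐᵒᵖ → Prop // IsDefinableRight A D},
        (∀ M, D.1 M → D'.1 M) → ∀ N, (Φ D).1 N → (Φ D').1 N) ∧
      (∀ (I : Type u) (m n p : I → ℕ)
        (U : ∀ i, Matrix (Fin (m i)) (Fin (n i)) A)
        (V : ∀ i, Matrix (Fin (p i)) (Fin (m i)) A),
        (Φ ⟨rightClass A m n p U V, ⟨I, m, n, p, U, V, rfl⟩⟩).1 =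
          leftClass A m n p U V) ∧
      (∀ (I : Type u) (m n p : I → ℕ)
        (U : ∀ i, Matrix (Fin (m i)) (Fin (n i)) A)
        (V : ∀ i, Matrix (Fin (p i)) (Fin (m i)) A),
        (Ψ ⟨leftClass A m n p U V, ⟨I, m, n, p, U, V, rfl⟩⟩).1 =
          rightClass A m n p U V) := by
  refine ⟨fun D => ⟨D.1 ∘ ModuleCat.charactersOfLeft, D.2.comp_charactersOfLeft⟩,
    fun E => ⟨E.1 ∘ ModuleCat.charactersOfRight, E.2.comp_charactersOfRight⟩, ?_, ?_,
    fun _ _ h _ => h _, fun _ _ _ _ _ _ => rightClass_comp_charactersOfLeft,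
    fun _ _ _ _ _ _ => leftClass_comp_charactersOfRight⟩
  · rintro ⟨_, I, m, n, p, U, V, rfl⟩
    apply Subtype.ext
    simp only [rightClass_comp_charactersOfLeft, leftClass_comp_charactersOfRight]
  · rintro ⟨_, I, m, n, p, U, V, rfl⟩
    apply Subtype.ext
    simp only [leftClass_comp_charactersOfRight, rightClass_comp_charactersOfLeft]
end
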